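/- For α = 0 (training only on source), if ĥ minimizes ε̂_P^{n} over H with uniform deviation η, then ε_Q(ĥ) ≤ inf_{h∈H} ε_Q(h) + 2η + d_{HΔH}(P_X,Q_X) + 2λ, where λ = inf_{h∈H}(ε_P(h)+ε_Q(h)) is attained in H and d_{HΔH}(P_X,Q_X) = 2 sup_{g,g'∈H}|P_X{g≠g'} − Q_X{g≠g'}|. -/

import Mathlib

open MeasureTheory ProbabilityTheory

noncomputable def err {X : Type*} [MeasurableSpace X]
    (P : Measure (X × Bool)) (h : X → Bool) : ℝ :=
  (P {p | h p.1 ≠ p.2}).toReal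

noncomputable def dis {X : Type*} [MeasurableSpace X]
    (P : Measure (X × Bool)) (h h' : X → Bool) : ℝ :=
  (P {p | h p.1 ≠ h' p.1}).toReal

noncomputable def disX {X : Type*} [MeasurableSpace X]
    (μ : Measure X) (h h' : X → Bool) : ℝ :=
  (μ {x | h x ≠ h' x}).toReal

/-- The HΔH-distance between two marginal distributions with respect to class `H`. -/
noncomputable def dHH {X : Type*} [MeasurableSpace X]
    (H : Set (X → Bool)) (μ ν : Measure X) : ℝ :=
  2 * ⨆ p : H × H, |disX μ p.1.1 p.2.1 - disX ν p.1.1 p.2.1|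

lemma toReal_tri {α : Type*} [MeasurableSpace α] (μ : Measure α) [IsFiniteMeasure μ]
    {A B C : Set α} (hsub : A ⊆ B ∪ C) :
    (μ A).toReal ≤ (μ B).toReal + (μ C).toReal := by
  rw [← ENNReal.toReal_add (measure_ne_top μ B) (measure_ne_top μ C)]
  exact ENNReal.toReal_mono
    (ENNReal.add_ne_top.mpr ⟨measure_ne_top μ B, measure_ne_top μ C⟩)
    ((measure_mono hsub).trans (measure_union_le _ _))

lemma err_tri {X : Type*} [MeasurableSpace X]
    (P : Measure (X × Bool)) [IsProbabilityMeasure P] (h h' : X → Bool) :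
    err P h ≤ err P h' + dis P h h' := by
  refine toReal_tri P ?_
  intro p hp
  by_cases hc : h' p.1 = p.2
  · exact Or.inr (by simp [Set.mem_setOf_eq]; intro he; exact hp (he.trans hc))
  · exact Or.inl hc

lemma dis_tri {X : Type*} [MeasurableSpace X]
    (P : Measure (X × Bool)) [IsProbabilityMeasure P] (h h' : X → Bool) :
    dis P h h' ≤ err P h + err P h' := by
  refine toReal_tri P ?_
  intro p hp
  by_cases hc : h p.1 = p.2
  · exact Or.inr (fun he => hp (hc.trans he.symm))
  · exact Or.inl hc

lemma dis_eq_disX {X : Type*} [MeasurableSpace X]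
    (P : Measure (X × Bool)) {h h' : X → Bool}
    (hm : Measurable h) (hm' : Measurable h') :
    dis P h h' = disX (Measure.map Prod.fst P) h h' := by
  unfold dis disX
  have hset : {x | h x ≠ h' x} = {x | h x = h' x}ᶜ := rfl
  rw [hset, Measure.map_apply measurable_fst
    ((measurableSet_eq_fun hm hm').compl)]
  rfl

theorem erm_source_only {X : Type*} [MeasurableSpace X]
    (P Q : Measure (X × Bool)) [IsProbabilityMeasure P] [IsProbabilityMeasure Q]
    (H : Set (X → Bool)) (hne : H.Nonempty) (hmeas : ∀ h ∈ H, Measurable h)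
    (hatε : (X → Bool) → ℝ) (η : ℝ) (hη : 0 ≤ η)
    (hhat : X → Bool) (hhatH : hhat ∈ H)
    (hhat_opt : ∀ h ∈ H, hatε hhat ≤ hatε h)
    (hunif : ∀ h ∈ H, |hatε h - err P h| ≤ η)
    (hstar : X → Bool) (hstarH : hstar ∈ H)
    (hstar_opt : ∀ h ∈ H, err P hstar + err Q hstar ≤ err P h + err Q h) :
    err Q hhat ≤ (⨅ h : H, err Q h.1) + 2 * η
      + dHH H (Measure.map Prod.fst P) (Measure.map Prod.fst Q)
      + 2 * (err P hstar + err Q hstar) := by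
  have hPX : IsProbabilityMeasure (Measure.map Prod.fst P) :=
    Measure.isProbabilityMeasure_map measurable_fst.aemeasurable
  have hQX : IsProbabilityMeasure (Measure.map Prod.fst Q) :=
    Measure.isProbabilityMeasure_map measurable_fst.aemeasurable
  set μ := Measure.map Prod.fst P
  set ν := Measure.map Prod.fst Q
  -- bound every summand value in the sup by 1
  have hdisX_mem : ∀ (κ : Measure X), IsProbabilityMeasure κ →
      ∀ g g' : X → Bool, 0 ≤ disX κ g g' ∧ disX κ g g' ≤ 1 := by
    intro κ hκ g g'
    refine ⟨ENNReal.toReal_nonneg, ?_⟩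
    have := prob_le_one (μ := κ) (s := {x | g x ≠ g' x})
    simpa [disX] using ENNReal.toReal_mono ENNReal.one_ne_top this
  have hbdd : BddAbove (Set.range fun p : H × H =>
      |disX μ p.1.1 p.2.1 - disX ν p.1.1 p.2.1|) := by
    refine ⟨1, ?_⟩
    rintro x ⟨p, rfl⟩
    obtain ⟨h0μ, h1μ⟩ := hdisX_mem μ hPX p.1.1 p.2.1
    obtain ⟨h0ν, h1ν⟩ := hdisX_mem ν hQX p.1.1 p.2.1
    rw [abs_sub_le_iff]; constructor <;> linarith
  set S := ⨆ p : H × H, |disX μ p.1.1 p.2.1 - disX ν p.1.1 p.2.1| with hS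
  have hle : |disX μ hhat hstar - disX ν hhat hstar| ≤ S :=
    le_ciSup hbdd (⟨⟨hhat, hhatH⟩, ⟨hstar, hstarH⟩⟩ : H × H)
  have hS0 : 0 ≤ S := le_trans (abs_nonneg _) hle
  -- key chain
  have h1 : err Q hhat ≤ err Q hstar + disX ν hhat hstar := by
    have := err_tri Q hhat hstar
    rwa [dis_eq_disX Q (hmeas _ hhatH) (hmeas _ hstarH)] at this
  have h2 : disX ν hhat hstar ≤ disX μ hhat hstar + S := by
    have := abs_sub_le_iff.mp hle
    linarith [this.2]
  have h3 : disX μ hhat hstar ≤ err P hhat + err P hstar := by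
    have := dis_tri P hhat hstar
    rwa [dis_eq_disX P (hmeas _ hhatH) (hmeas _ hstarH)] at this
  have h4 : err P hhat ≤ err P hstar + 2 * η := by
    have ha := abs_sub_le_iff.mp (hunif hhat hhatH)
    have hb := abs_sub_le_iff.mp (hunif hstar hstarH)
    have hc := hhat_opt hstar hstarH
    linarith [ha.2, hb.1]
  haveI : Nonempty H := ⟨⟨hhat, hhatH⟩⟩
  have hinf0 : (0:ℝ) ≤ ⨅ h : H, err Q h.1 := by
    refine le_ciInf fun h => ENNReal.toReal_nonneg
  have hdHH : dHH H μ ν = 2 * S := rfl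
  have hQs : 0 ≤ err Q hstar := ENNReal.toReal_nonneg
  rw [hdHH]
  linarith
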